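/- arXiv:1806.03591 — 2 statements merged into one kernel-verified Lean document; each statement's English description precedes it below -/
import Mathlib

section
/- The Wermer map φ(z₁,z₂,z₃) = (z₁, z₁z₂² + 2z₃z₂, z₁z₂ + z₃) is injective on the half space H = {z ∈ ℂ³ : Re(z₃) < 0}. -/
/-- The Wermer map φ(z₁,z₂,z₃) = (z₁, z₁z₂² + 2z₃z₂, z₁z₂ + z₃). -/
def wermer (z : ℂ × ℂ × ℂ) : ℂ × ℂ × ℂ :=
  (z.1, z.1 * z.2.1 ^ 2 + 2 * z.2.2 * z.2.1, z.1 * z.2.1 + z.2.2)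

/-- The half space H = {z ∈ ℂ³ : Re(z₃) < 0}. -/
def halfSpace : Set (ℂ × ℂ × ℂ) := {z | z.2.2.re < 0}

theorem wermer_injOn_halfSpace : Set.InjOn wermer halfSpace := by
  rintro ⟨a, b, c⟩ hz ⟨a', b', c'⟩ hw h
  simp only [wermer, Prod.mk.injEq] at h
  obtain ⟨h1, h2, h3⟩ := h
  subst h1
  simp only [halfSpace, Set.mem_setOf_eq] at hz hw
  have key : (b - b') * (a * (b - b') + 2 * c) = 0 := by
    linear_combination h2 - 2 * b' * h3
  rcases mul_eq_zero.mp key with hb | hh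
  · have hb' : b = b' := sub_eq_zero.mp hb
    subst hb'
    have hc : c = c' := by linear_combination h3
    simp [hc]
  · have hc' : c' = -c := by linear_combination hh - h3
    rw [hc', Complex.neg_re] at hw
    linarith
end

section
/- If φ(z₁,z₂,z₃) = φ(w₁,w₂,w₃) with Re(z₃) < 0 and Re(w₃) < 0, then z₁ = w₁, z₂ = w₂ and z₃ = w₃; concretely, for each fixed z₁ ∈ ℂ the map (z₂,z₃) ↦ (z₁z₂² + 2z₃z₂, z₁z₂ + z₃) is injective on {Re(z₃) < 0}. -/
theorem wermer_fiber_injective (z₁ : ℂ) :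
    Set.InjOn (fun p : ℂ × ℂ => (z₁ * p.1 ^ 2 + 2 * p.2 * p.1, z₁ * p.1 + p.2))
      {p : ℂ × ℂ | p.2.re < 0} := by
  rintro ⟨z₂, z₃⟩ hz ⟨w₂, w₃⟩ hw h
  simp only [Set.mem_setOf_eq] at hz hw
  simp only [Prod.mk.injEq] at h
  obtain ⟨h1, h2⟩ := h
  have key : (z₂ - w₂) * (z₁ * (z₂ - w₂) + 2 * z₃) = 0 := by
    linear_combination h1 - 2 * w₂ * h2
  rcases mul_eq_zero.mp key with h0 | h0
  · have hz2 : z₂ = w₂ := by linear_combination h0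
    subst hz2
    have : z₃ = w₃ := by linear_combination h2
    simp [this]
  · exfalso
    have hw3 : w₃ = -z₃ := by linear_combination h0 - h2
    rw [hw3] at hw
    simp only [Complex.neg_re] at hw
    linarith
end
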